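/- Let φ ∈ ℝ^d with ‖φ‖ = 1 and D a finite nonempty set with φᵀx < 0 for all x ∈ D. Let d_max = max_{x∈D}|φᵀx|. Among all vectors Δx ∈ ℝ^d with ‖Δx‖ ≤ 1 + d_max that make max_{x∈D} max{1 − φᵀ(x+Δx), 0} = 0, the vector Δx* = (1+d_max)φ has minimal norm; moreover any Δx achieving zero hinge loss on all of D must satisfy φᵀΔx ≥ 1 + d_min where d_min = min_{x∈D}|φᵀx|, hence ‖Δx‖ ≥ 1 + d_min. -/

import Mathlib

open scoped RealInnerProductSpace

section HingeLoss

variable {E : Type*} [NormedAddCommGroup E] [InnerProductSpace ℝ E]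

theorem max_one_sub_zero_eq_zero_iff {a : ℝ} : max (1 - a) 0 = 0 ↔ 1 ≤ a := by
  rw [max_eq_right_iff, sub_nonpos]

theorem real_inner_le_norm_of_norm_eq_one {φ : E} (hφ : ‖φ‖ = 1) (v : E) : ⟪φ, v⟫ ≤ ‖v‖ := by
  simpa [hφ] using real_inner_le_norm φ v

theorem one_add_abs_inner_le_inner_of_hinge_eq_zero {φ x Δ : E} (hx : ⟪φ, x⟫ < 0)
    (h : max (1 - ⟪φ, x + Δ⟫) 0 = 0) : 1 + |⟪φ, x⟫| ≤ ⟪φ, Δ⟫ := by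
  rw [max_one_sub_zero_eq_zero_iff, inner_add_right] at h
  rw [abs_of_neg hx]
  linarith

end HingeLoss

theorem stmt_2 {d : ℕ} (φ : EuclideanSpace ℝ (Fin d)) (hφ : ‖φ‖ = 1)
    (D : Finset (EuclideanSpace ℝ (Fin d))) (hD : D.Nonempty)
    (hdc : ∀ x ∈ D, ⟪φ, x⟫ < 0)
    (dmax : ℝ) (hdmax : dmax = D.sup' hD fun y => |⟪φ, y⟫|)
    (dmin : ℝ) (hdmin : dmin = D.inf' hD fun y => |⟪φ, y⟫|) :
    (∀ Δ : EuclideanSpace ℝ (Fin d),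
        ‖Δ‖ ≤ 1 + dmax →
        (∀ x ∈ D, max (1 - ⟪φ, x + Δ⟫) 0 = 0) →
        ‖(1 + dmax) • φ‖ ≤ ‖Δ‖) ∧
    (∀ Δ : EuclideanSpace ℝ (Fin d),
        (∀ x ∈ D, max (1 - ⟪φ, x + Δ⟫) 0 = 0) →
        1 + dmin ≤ ⟪φ, Δ⟫ ∧ 1 + dmin ≤ ‖Δ‖) := by
  have margin : ∀ Δ, (∀ x ∈ D, max (1 - ⟪φ, x + Δ⟫) 0 = 0) → ∀ x ∈ D, 1 + |⟪φ, x⟫| ≤ ⟪φ, Δ⟫ :=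
    fun Δ h x hx => one_add_abs_inner_le_inner_of_hinge_eq_zero (hdc x hx) (h x hx)
  obtain ⟨x₀, hx₀⟩ := hD
  refine ⟨fun Δ _ h => ?_, fun Δ h => ?_⟩
  · have hdmax_nonneg : 0 ≤ dmax := hdmax ▸ Finset.le_sup'_of_le _ hx₀ (abs_nonneg _)
    have hdmax_le : dmax ≤ ⟪φ, Δ⟫ - 1 :=
      hdmax ▸ Finset.sup'_le _ _ fun x hx => le_sub_iff_add_le'.mpr (margin Δ h x hx)
    calc ‖(1 + dmax) • φ‖ = 1 + dmax := by
          rw [norm_smul, hφ, mul_one, Real.norm_of_nonneg (by linarith)]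
      _ ≤ ⟪φ, Δ⟫ := by linarith
      _ ≤ ‖Δ‖ := real_inner_le_norm_of_norm_eq_one hφ Δ
  · have hdmin_le : dmin ≤ |⟪φ, x₀⟫| := hdmin ▸ Finset.inf'_le _ hx₀
    have hinner : 1 + dmin ≤ ⟪φ, Δ⟫ := by linarith [margin Δ h x₀ hx₀]
    exact ⟨hinner, hinner.trans (real_inner_le_norm_of_norm_eq_one hφ Δ)⟩
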